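/- For every integer k ≥ 1, one has [2]_q · Σ_{j=0}^{⌊k/2⌋} C(k,2j)·Ẽ_{2k-2j+1}/(2k-2j+1) + (q−1) · Σ_{j=0}^{⌊k/2⌋} C(k,2j+1)·Ẽ_{2k-2j}/(2k-2j) = q·(−1)^{k+1} / ((2k+1)·C(2k,k)), where C(n,j) denotes the binomial coefficient (equal to 0 when j > n) and ⌊·⌋ is the floor function. -/

import Mathlib

/-!
Let `L` be the linear functional on `ℝ[X]` with `L (X ^ n) = E n`. The recurrence says exactly
that `q * L (p.comp (X + 1)) + L p = (1 + q) * p.eval 0` for every polynomial `p`.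
Sorting the terms of the left-hand side by the parity of the binomial index shows that it is
`q * L P₊ + L P₋`, where `P₊`, `P₋` are the primitives of `X ^ k * (X + 1) ^ k` and
`X ^ k * (X - 1) ^ k` vanishing at `0`. As `P₋.comp (X + 1) = P₊ + P₋.eval 1`, this equals
`-q * P₋.eval 1`, and `P₋.eval 1 = ∫₀¹ tᵏ (t - 1)ᵏ dt = (-1) ^ k * k! ^ 2 / (2k + 1)!`.
-/

open Finset Polynomial Nat

theorem sum_range_two_mul {M : Type*} [AddCommMonoid M] (f : ℕ → M) (m : ℕ) :
    ∑ i ∈ range (2 * m), f i = ∑ j ∈ range m, f (2 * j) + ∑ j ∈ range m, f (2 * j + 1) := by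
  induction m with
  | zero => simp
  | succ m ih =>
    rw [mul_add_one, sum_range_succ, sum_range_succ, ih, sum_range_succ, sum_range_succ]
    abel

theorem sum_range_succ_eq_sum_even_add_sum_odd {M : Type*} [AddCommMonoid M] {f : ℕ → M} {n : ℕ}
    (hf : ∀ i, n < i → f i = 0) :
    ∑ i ∈ range (n + 1), f i =
      ∑ j ∈ range (n / 2 + 1), f (2 * j) + ∑ j ∈ range (n / 2 + 1), f (2 * j + 1) := by
  rw [← sum_range_two_mul]
  refine sum_subset (range_subset_range.mpr (by omega)) fun i hi hni => hf i ?_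
  simp only [mem_range] at hi hni
  omega

/-- The Beta integral `∫₀¹ xᶜ (1 - x)ⁿ dx`, expanded binomially. -/
theorem sum_range_choose_mul_neg_one_pow_div {K : Type*} [Field K] [CharZero K] (n c : ℕ) :
    ∑ i ∈ range (n + 1), (n.choose i : K) * ((-1) ^ i / (i + c + 1)) =
      n ! * c ! / (n + c + 1)! := by
  induction n generalizing c with
  | zero =>
    have : (c ! : K) ≠ 0 := Nat.cast_ne_zero.mpr c.factorial_ne_zero
    simp only [zero_add, sum_range_one, pow_zero, Nat.choose_self, Nat.factorial_zero,
      Nat.factorial_succ c]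
    push_cast
    field_simp
    ring
  | succ n ih =>
    have hshift : ∑ i ∈ range (n + 1), (n.choose i : K) * ((-1) ^ (i + 1) / ((i + 1 : ℕ) + c + 1)) =
        -∑ i ∈ range (n + 1), (n.choose i : K) * ((-1) ^ i / (i + (c + 1 : ℕ) + 1)) := by
      rw [← sum_neg_distrib]
      refine sum_congr rfl fun i _ => ?_
      push_cast
      ring
    rw [sum_choose_succ_mul (fun i (_ : ℕ) => ((-1 : K) ^ i / (i + c + 1))) n, hshift, ih c,
      ih (c + 1), show n + (c + 1) + 1 = n + c + 1 + 1 by ring,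
      show n + 1 + c + 1 = n + c + 1 + 1 by ring, Nat.factorial_succ (n + c + 1),
      Nat.factorial_succ c, Nat.factorial_succ n]
    have : ((n + c + 1)! : K) ≠ 0 := Nat.cast_ne_zero.mpr (Nat.factorial_ne_zero _)
    have : ((n + c + 1 : ℕ) : K) + 1 ≠ 0 := Nat.cast_add_one_ne_zero _
    push_cast at *
    field_simp
    ring

section Umbral

variable {R : Type*} [CommRing R]

noncomputable def umbral (E : ℕ → R) : R[X] →ₗ[R] R :=
  lsum fun n => LinearMap.mulRight R (E n)

variable (E : ℕ → R)

theorem umbral_monomial (n : ℕ) (a : R) : umbral E (monomial n a) = a * E n := by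
  simp [umbral]

theorem umbral_C_mul_X_pow (n : ℕ) (a : R) : umbral E (C a * X ^ n) = a * E n := by
  rw [C_mul_X_pow_eq_monomial, umbral_monomial]

theorem umbral_C (a : R) : umbral E (C a) = a * E 0 := by
  rw [← monomial_zero_left, umbral_monomial]

theorem umbral_C_mul (a : R) (p : R[X]) : umbral E (C a * p) = a * umbral E p := by
  rw [← smul_eq_C_mul, map_smul, smul_eq_mul]

theorem umbral_X_add_one_pow (n : ℕ) :
    umbral E ((X + 1) ^ n) = ∑ j ∈ range (n + 1), (n.choose j : R) * E j := by
  rw [add_pow, map_sum]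
  refine sum_congr rfl fun j _ => ?_
  rw [one_pow, mul_one, ← C_eq_natCast, mul_comm, umbral_C_mul_X_pow]

theorem umbral_comp_X_add_one {q : R} (hE0 : E 0 = 1)
    (hE : ∀ n : ℕ, 1 ≤ n → q * ∑ j ∈ range (n + 1), (n.choose j : R) * E j + E n = 0)
    (p : R[X]) : q * umbral E (p.comp (X + 1)) + umbral E p = (1 + q) * p.eval 0 := by
  induction p using Polynomial.induction_on' with
  | add p r hp hr =>
    simp only [add_comp, map_add, eval_add]
    linear_combination hp + hr
  | monomial n a =>
    rw [monomial_comp, umbral_C_mul, umbral_X_add_one_pow, umbral_monomial, eval_monomial]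
    rcases Nat.eq_zero_or_pos n with rfl | hn
    · simp only [zero_add, range_one, sum_singleton, choose_self, cast_one, hE0, mul_one, pow_zero]
      ring
    · rw [zero_pow hn.ne']
      linear_combination a * hE n hn

end Umbral

section BetaPrimitive

variable {K : Type*} [Field K]

noncomputable def betaPrimitive (a : K) (k : ℕ) : K[X] :=
  ∑ i ∈ range (k + 1), C (a ^ i * k.choose i / ((2 * k - i + 1 : ℕ) : K)) * X ^ (2 * k - i + 1)

theorem eval_zero_betaPrimitive (a : K) (k : ℕ) : (betaPrimitive a k).eval 0 = 0 := by
  simp [betaPrimitive, eval_finsetSum]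

theorem umbral_betaPrimitive (E : ℕ → K) (a : K) (k : ℕ) :
    umbral E (betaPrimitive a k) = ∑ i ∈ range (k + 1),
      a ^ i * ((k.choose i : K) * (E (2 * k - i + 1) / ((2 * k - i + 1 : ℕ) : K))) := by
  simp only [betaPrimitive, map_sum, umbral_C_mul_X_pow]
  exact sum_congr rfl fun i _ => by ring

variable [CharZero K]

theorem derivative_betaPrimitive (a : K) (k : ℕ) :
    derivative (betaPrimitive a k) = X ^ k * (X + C a) ^ k := by
  rw [betaPrimitive, derivative_sum, add_comm X, add_pow, mul_sum]
  refine sum_congr rfl fun i hi => ?_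
  have hik : i ≤ k := Nat.lt_succ_iff.mp (mem_range.mp hi)
  have hne : ((2 * k - i + 1 : ℕ) : K) ≠ 0 := Nat.cast_ne_zero.mpr (Nat.succ_ne_zero _)
  rw [derivative_C_mul_X_pow, Nat.add_sub_cancel, div_mul_cancel₀ _ hne, ← C_pow,
    ← C_eq_natCast, show 2 * k - i = k + (k - i) by omega, pow_add, C_mul]
  ring

theorem betaPrimitive_comp_X_add_C (b : K) (k : ℕ) :
    (betaPrimitive (-b) k).comp (X + C b) =
      betaPrimitive b k + C ((betaPrimitive (-b) k).eval b) := by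
  set D := (betaPrimitive (-b) k).comp (X + C b) - betaPrimitive b k
  have hD : derivative D = 0 := by
    simp only [D, derivative_sub, derivative_comp, derivative_betaPrimitive, derivative_add,
      derivative_X, derivative_C, add_zero, one_mul, mul_comp, pow_comp, add_comp, X_comp, C_comp,
      C_neg, neg_comp]
    ring
  have hD0 : D.coeff 0 = (betaPrimitive (-b) k).eval b := by
    simp [D, coeff_zero_eq_eval_zero, eval_comp, eval_zero_betaPrimitive]
  rw [← sub_eq_iff_eq_add', ← hD0]
  exact eq_C_of_derivative_eq_zero hD

theorem eval_one_betaPrimitive_neg_one (k : ℕ) :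
    (betaPrimitive (-1 : K) k).eval 1 =
      (-1) ^ k / (((2 * k + 1 : ℕ) : K) * ((2 * k).choose k : K)) := by
  simp only [betaPrimitive, eval_finsetSum, eval_mul, eval_C, eval_pow, eval_X, one_pow, mul_one]
  rw [← sum_range_reflect]
  have hreflect : ∀ j ∈ range (k + 1),
      (-1 : K) ^ (k + 1 - 1 - j) * (k.choose (k + 1 - 1 - j) : K) /
          ((2 * k - (k + 1 - 1 - j) + 1 : ℕ) : K) =
        (-1) ^ k * ((k.choose j : K) * ((-1) ^ j / (j + k + 1))) := by
    intro j hj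
    have hjk : j ≤ k := Nat.lt_succ_iff.mp (mem_range.mp hj)
    rw [Nat.add_sub_cancel, Nat.choose_symm hjk, show 2 * k - (k - j) + 1 = j + k + 1 by omega,
      pow_sub₀ _ (neg_ne_zero.mpr one_ne_zero) hjk, ← inv_pow, inv_neg_one]
    push_cast
    ring
  have hk : (k ! : K) ≠ 0 := Nat.cast_ne_zero.mpr k.factorial_ne_zero
  rw [sum_congr rfl hreflect, ← mul_sum, sum_range_choose_mul_neg_one_pow_div, Nat.factorial_succ,
    two_mul, ← Nat.add_choose_mul_factorial_mul_factorial k k]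
  push_cast
  field_simp

theorem umbral_betaPrimitive_shift {q : K} {E : ℕ → K} (hE0 : E 0 = 1)
    (hE : ∀ n : ℕ, 1 ≤ n → q * ∑ j ∈ range (n + 1), (n.choose j : K) * E j + E n = 0) (k : ℕ) :
    q * umbral E (betaPrimitive 1 k) + umbral E (betaPrimitive (-1) k) =
      -q * (betaPrimitive (-1) k).eval 1 := by
  have hshift := umbral_comp_X_add_one E hE0 hE (betaPrimitive (-1) k)
  have hcomp := betaPrimitive_comp_X_add_C (1 : K) k
  rw [C_1] at hcomp
  rw [hcomp, map_add, umbral_C, hE0, eval_zero_betaPrimitive] at hshift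
  linear_combination hshift

end BetaPrimitive

theorem stmt_6_general (q : ℝ)
    (E : ℕ → ℝ) (hE0 : E 0 = 1)
    (hE : ∀ n : ℕ, 1 ≤ n →
      q * ∑ j ∈ range (n + 1), (n.choose j : ℝ) * E j + E n = 0)
    (k : ℕ) :
    (1 + q) * ∑ j ∈ range (k / 2 + 1),
        (k.choose (2 * j) : ℝ) * (E (2 * k - 2 * j + 1) / ((2 * k - 2 * j + 1 : ℕ) : ℝ))
      + (q - 1) * ∑ j ∈ range (k / 2 + 1),
          (k.choose (2 * j + 1) : ℝ) * (E (2 * k - 2 * j) / ((2 * k - 2 * j : ℕ) : ℝ))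
    = q * (-1 : ℝ) ^ (k + 1) / (((2 * k + 1 : ℕ) : ℝ) * ((2 * k).choose k : ℝ)) := by
  have hparity : (1 + q) * ∑ j ∈ range (k / 2 + 1),
        (k.choose (2 * j) : ℝ) * (E (2 * k - 2 * j + 1) / ((2 * k - 2 * j + 1 : ℕ) : ℝ))
      + (q - 1) * ∑ j ∈ range (k / 2 + 1),
          (k.choose (2 * j + 1) : ℝ) * (E (2 * k - 2 * j) / ((2 * k - 2 * j : ℕ) : ℝ)) =
      ∑ i ∈ range (k + 1),
        (q + (-1) ^ i) * ((k.choose i : ℝ) * (E (2 * k - i + 1) / ((2 * k - i + 1 : ℕ) : ℝ))) := by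
    rw [sum_range_succ_eq_sum_even_add_sum_odd (n := k)
      fun i hi => by simp [Nat.choose_eq_zero_of_lt hi], mul_sum, mul_sum]
    congr 1 <;> refine sum_congr rfl fun j _ => ?_
    · rw [pow_mul, neg_one_sq, one_pow, add_comm q]
    · rcases Nat.lt_or_ge k (2 * j + 1) with hlt | hle
      · simp [Nat.choose_eq_zero_of_lt hlt]
      · rw [show 2 * k - (2 * j + 1) + 1 = 2 * k - 2 * j by omega, pow_succ, pow_mul, neg_one_sq,
          one_pow, one_mul, ← sub_eq_add_neg]
  have hshift := umbral_betaPrimitive_shift hE0 hE k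
  rw [umbral_betaPrimitive, umbral_betaPrimitive, eval_one_betaPrimitive_neg_one] at hshift
  simp only [one_pow, one_mul] at hshift
  rw [hparity, pow_succ]
  simp only [add_mul, sum_add_distrib, ← mul_sum]
  linear_combination hshift

theorem stmt_6 (q : ℝ) (hq0 : q ≠ 0) (hq1 : q ≠ -1)
    (E : ℕ → ℝ) (hE0 : E 0 = 1)
    (hE : ∀ n : ℕ, 1 ≤ n →
      q * ∑ j ∈ range (n + 1), (n.choose j : ℝ) * E j + E n = 0)
    (k : ℕ) (hk : 1 ≤ k) :
    (1 + q) * ∑ j ∈ range (k / 2 + 1),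
        (k.choose (2 * j) : ℝ) * (E (2 * k - 2 * j + 1) / ((2 * k - 2 * j + 1 : ℕ) : ℝ))
      + (q - 1) * ∑ j ∈ range (k / 2 + 1),
          (k.choose (2 * j + 1) : ℝ) * (E (2 * k - 2 * j) / ((2 * k - 2 * j : ℕ) : ℝ))
    = q * (-1 : ℝ) ^ (k + 1) / (((2 * k + 1 : ℕ) : ℝ) * ((2 * k).choose k : ℝ)) :=
  stmt_6_general q E hE0 hE k
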